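/- arXiv:2009.00720 — 2 statements merged into one kernel-verified Lean document; each statement's English description precedes it below -/
import Mathlib

section
/- If λ·m < 0, then f(t) converges as t → +∞ and as t → −∞, and each of the two limits is equal to √(−λm) or to −√(−λm). -/
/-!
With `k = 1 / m` and `a = √(-λm)` the equation reads `f' = k (f² - a²)`. Take `k > 0`.
If `f t₀ = c > a`, then `f` can never come back down to `c` (there `f' > 0`), so `f ≥ c` from
`t₀` on, hence `f' ≥ ε f²` with `ε = k (1 - a² / c²) > 0`; then `1 / f` decreases at rate at
least `ε` and would become negative in finite time. So `f ≤ a`, and the symmetry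
`f ↦ -f (-·)` of the equation gives `f ≥ -a`. Thus `f' ≤ 0`: `f` is antitone and bounded, so
it converges at `±∞`, and since `f'` then converges too, its limit `k (L² - a²)` must vanish.
Reversing time reduces `k < 0` to `k > 0`.
-/

open Filter Set Topology

def IsRiccatiSolution (k a : ℝ) (f : ℝ → ℝ) : Prop :=
  ∀ t, HasDerivAt f (k * (f t ^ 2 - a ^ 2)) t

theorem eq_zero_of_tendsto_of_hasDerivAt {f f' : ℝ → ℝ} {L c : ℝ}
    (hf : ∀ t, HasDerivAt f (f' t) t) (hfL : Tendsto f atTop (𝓝 L))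
    (hf'c : Tendsto f' atTop (𝓝 c)) : c = 0 := by
  have mean_value : ∀ t : ℝ, ∃ ξ ∈ Ioo t (t + 1), f' ξ = f (t + 1) - f t := by
    intro t
    obtain ⟨ξ, hξ, hslope⟩ := exists_hasDerivAt_eq_slope f f' (lt_add_one t)
      (fun x _ => (hf x).continuousAt.continuousWithinAt) (fun x _ => hf x)
    exact ⟨ξ, hξ, by rwa [add_sub_cancel_left, div_one] at hslope⟩
  choose ξ hξ hξf using mean_value
  have hξ_top : Tendsto ξ atTop atTop := tendsto_atTop_mono (fun t => (hξ t).1.le) tendsto_id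
  have h_incr : Tendsto (fun t => f (t + 1) - f t) atTop (𝓝 (L - L)) :=
    (hfL.comp (tendsto_atTop_add_const_right _ 1 tendsto_id)).sub hfL
  rw [sub_self] at h_incr
  exact tendsto_nhds_unique ((hf'c.comp hξ_top).congr hξf) h_incr

theorem mul_sub_lt_inv_of_mul_sq_le_deriv {f f' : ℝ → ℝ} {ε s t : ℝ} (hst : s ≤ t)
    (hf : ∀ x ∈ Icc s t, HasDerivAt f (f' x) x) (hpos : ∀ x ∈ Icc s t, 0 < f x)
    (hf' : ∀ x ∈ Icc s t, ε * f x ^ 2 ≤ f' x) : ε * (t - s) < (f s)⁻¹ := by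
  have hinv : ∀ x ∈ Icc s t, HasDerivAt (fun y => (f y)⁻¹) (-f' x / f x ^ 2) x :=
    fun x hx => (hf x hx).inv (hpos x hx).ne'
  have h_decay : ∀ x ∈ Icc s t, (f x)⁻¹ ≤ (f s)⁻¹ - ε * (x - s) := by
    refine image_le_of_deriv_right_le_deriv_boundary (f' := fun x => -f' x / f x ^ 2)
      (B' := fun _ => -ε) (fun x hx => (hinv x hx).continuousAt.continuousWithinAt)
      (fun x hx => (hinv x (Ico_subset_Icc_self hx)).hasDerivWithinAt) (by simp)
      (by fun_prop) (fun x _ => ?_) (fun x hx => ?_)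
    · simpa using ((hasDerivAt_id x).sub_const s).const_mul ε |>.const_sub (f s)⁻¹
        |>.hasDerivWithinAt
    · have hx := Ico_subset_Icc_self hx
      rw [neg_div, neg_le_neg_iff, le_div_iff₀ (pow_pos (hpos x hx) 2)]
      exact hf' x hx
  linarith [h_decay t ⟨hst, le_rfl⟩, inv_pos.2 (hpos t ⟨hst, le_rfl⟩)]

namespace IsRiccatiSolution

variable {k a : ℝ} {f : ℝ → ℝ}

theorem neg_comp_neg (hf : IsRiccatiSolution k a f) :
    IsRiccatiSolution k a (fun t => -f (-t)) := fun t =>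
  ((hf (-t)).comp t (hasDerivAt_neg' t)).neg.congr_deriv (by ring)

theorem comp_neg (hf : IsRiccatiSolution k a f) :
    IsRiccatiSolution (-k) a (fun t => f (-t)) := fun t =>
  ((hf (-t)).comp t (hasDerivAt_neg' t)).congr_deriv (by ring)

theorem le (hf : IsRiccatiSolution k a f) (hk : 0 < k) (ha : 0 ≤ a) (t₀ : ℝ) : f t₀ ≤ a := by
  by_contra! hca
  set c := f t₀
  have hc : 0 < c := ha.trans_lt hca
  have hac : a ^ 2 < c ^ 2 := by gcongr
  set ε := k * (c ^ 2 - a ^ 2) / c ^ 2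
  have hε : 0 < ε := by have := sub_pos.2 hac; positivity
  set T := t₀ + c⁻¹ / ε
  have hT : t₀ ≤ T := le_add_of_nonneg_right (by positivity)
  have hf_ge : ∀ x ∈ Icc t₀ T, c ≤ f x := by
    intro x hx
    have := image_le_of_deriv_right_lt_deriv_boundary (f := fun x => -f x) (B := fun _ => -c)
      (f' := fun x => -(k * (f x ^ 2 - a ^ 2))) (B' := 0)
      (fun x _ => (hf x).continuousAt.neg.continuousWithinAt)
      (fun x _ => (hf x).neg.hasDerivWithinAt) le_rfl (fun _ => hasDerivAt_const _ _)
      (fun x _ hfx => by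
        have hfx : f x = c := neg_inj.1 hfx
        simpa [hfx] using mul_pos hk (sub_pos.2 hac)) hx
    exact neg_le_neg_iff.1 this
  have h_sq : ∀ x ∈ Icc t₀ T, ε * f x ^ 2 ≤ k * (f x ^ 2 - a ^ 2) := by
    intro x hx
    have hcx : c ^ 2 ≤ f x ^ 2 := pow_le_pow_left₀ hc.le (hf_ge x hx) 2
    rw [div_mul_eq_mul_div, div_le_iff₀ (by positivity), mul_assoc, mul_assoc]
    refine mul_le_mul_of_nonneg_left ?_ hk.le
    nlinarith [mul_le_mul_of_nonneg_left hcx (sq_nonneg a)]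
  have h_blowup := mul_sub_lt_inv_of_mul_sq_le_deriv hT (fun x _ => hf x)
    (fun x hx => hc.trans_le (hf_ge x hx)) h_sq
  rw [add_sub_cancel_left, mul_div_cancel₀ _ hε.ne'] at h_blowup
  exact h_blowup.false

theorem neg_le (hf : IsRiccatiSolution k a f) (hk : 0 < k) (ha : 0 ≤ a) (t : ℝ) : -a ≤ f t := by
  have := hf.neg_comp_neg.le hk ha (-t)
  rw [neg_neg] at this
  linarith

theorem antitone (hf : IsRiccatiSolution k a f) (hk : 0 < k) (ha : 0 ≤ a) : Antitone f :=
  antitone_of_hasDerivAt_nonpos hf fun t =>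
    mul_nonpos_of_nonneg_of_nonpos hk.le
      (sub_nonpos.2 (sq_le_sq' (hf.neg_le hk ha t) (hf.le hk ha t)))

theorem exists_tendsto_atTop_of_pos (hf : IsRiccatiSolution k a f) (hk : 0 < k) (ha : 0 ≤ a) :
    ∃ L, Tendsto f atTop (𝓝 L) ∧ L ^ 2 = a ^ 2 := by
  have hL := tendsto_atTop_ciInf (hf.antitone hk ha) ⟨-a, forall_mem_range.2 (hf.neg_le hk ha)⟩
  refine ⟨_, hL, ?_⟩
  have h_deriv := eq_zero_of_tendsto_of_hasDerivAt hf hL (((hL.pow 2).sub_const _).const_mul k)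
  exact sub_eq_zero.1 ((mul_eq_zero.1 h_deriv).resolve_left hk.ne')

theorem exists_tendsto_atBot_of_pos (hf : IsRiccatiSolution k a f) (hk : 0 < k) (ha : 0 ≤ a) :
    ∃ L, Tendsto f atBot (𝓝 L) ∧ L ^ 2 = a ^ 2 := by
  obtain ⟨L, hL, hLa⟩ := hf.neg_comp_neg.exists_tendsto_atTop_of_pos hk ha
  refine ⟨-L, ?_, by rwa [neg_sq]⟩
  simpa using (hL.comp tendsto_neg_atBot_atTop).neg

theorem exists_tendsto (hf : IsRiccatiSolution k a f) (hk : k ≠ 0) (ha : 0 ≤ a) :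
    (∃ L, Tendsto f atTop (𝓝 L) ∧ L ^ 2 = a ^ 2) ∧
      ∃ L, Tendsto f atBot (𝓝 L) ∧ L ^ 2 = a ^ 2 := by
  rcases hk.lt_or_gt with hk | hk
  · have hg := hf.comp_neg
    have hk' : 0 < -k := neg_pos.2 hk
    obtain ⟨L, hL, hLa⟩ := hg.exists_tendsto_atBot_of_pos hk' ha
    obtain ⟨M, hM, hMa⟩ := hg.exists_tendsto_atTop_of_pos hk' ha
    exact ⟨⟨L, by simpa [Function.comp_def] using hL.comp tendsto_neg_atTop_atBot, hLa⟩,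
      ⟨M, by simpa [Function.comp_def] using hM.comp tendsto_neg_atBot_atTop, hMa⟩⟩
  · exact ⟨hf.exists_tendsto_atTop_of_pos hk ha, hf.exists_tendsto_atBot_of_pos hk ha⟩

end IsRiccatiSolution

/-- If `λ·m < 0`, then `f` converges as `t → +∞` and as `t → −∞`, and each limit
equals `√(−λm)` or `−√(−λm)`. -/
theorem riccati_limits (m lam : ℝ) (hm : m ≠ 0) (f : ℝ → ℝ)
    (hf : ∀ t : ℝ, HasDerivAt f ((1 / m) * (f t) ^ 2 + lam) t)
    (h : lam * m < 0) :
    (∃ L : ℝ, Filter.Tendsto f Filter.atTop (nhds L) ∧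
      (L = Real.sqrt (-(lam * m)) ∨ L = -Real.sqrt (-(lam * m)))) ∧
    (∃ L : ℝ, Filter.Tendsto f Filter.atBot (nhds L) ∧
      (L = Real.sqrt (-(lam * m)) ∨ L = -Real.sqrt (-(lam * m)))) := by
  set a := Real.sqrt (-(lam * m))
  have ha2 : a ^ 2 = -(lam * m) := Real.sq_sqrt (by linarith)
  have hf' : IsRiccatiSolution (1 / m) a f := fun t => by
    convert hf t using 1
    rw [ha2]
    field_simp
    ring
  obtain ⟨⟨L, hL, hLa⟩, ⟨M, hM, hMa⟩⟩ := hf'.exists_tendsto (one_div_ne_zero hm) (Real.sqrt_nonneg _)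
  exact ⟨⟨L, hL, sq_eq_sq_iff_eq_or_eq_neg.1 hLa⟩, ⟨M, hM, sq_eq_sq_iff_eq_or_eq_neg.1 hMa⟩⟩
end

section
/- Let A be a linear endomorphism of V and x ∈ V with A x = 0. If tr(((1/2)(A + A*) − (‖x‖²/m)·P_x) ∘ A) = 0, then A + A* = 0, i.e., A is skew-adjoint. (This is the key linear-algebra step in the proof of Lemma 2.5 of the paper, applied there with A = ad_X, using that tr(A²) = tr((A*)²), that A ∘ P_x = 0 since A x = 0, and that a self-adjoint endomorphism whose square has trace zero vanishes.) -/
/-!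
Since `A x = 0`, the projection term contributes `tr (P_x ∘ A) = tr (A ∘ P_x) = 0`, so the
hypothesis says `tr (S ∘ A) = 0` for the self-adjoint `S = A + A*`. Taking adjoints inside the
trace gives `tr (S ∘ A*) = tr (S ∘ A)`, hence `tr (S* ∘ S) = tr (S ∘ S) = 2 tr (S ∘ A) = 0`; and
`tr (S* ∘ S)` is the sum of the squared norms of `S` on an orthonormal basis.
-/

namespace LinearMap

theorem trace_comp_eq_zero_of_range_le_ker {R M : Type*} [CommRing R] [AddCommGroup M]
    [Module R M] [Module.Free R M] [Module.Finite R M] {f g : M →ₗ[R] M}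
    (h : range f ≤ ker g) : trace R M (f ∘ₗ g) = 0 := by
  rw [trace_comp_comm', range_le_ker_iff.mp h, map_zero]

section InnerProductSpace

variable {𝕜 E : Type*} [RCLike 𝕜] [NormedAddCommGroup E] [InnerProductSpace 𝕜 E]
  [FiniteDimensional 𝕜 E]

theorem trace_adjoint (T : E →ₗ[𝕜] E) : trace 𝕜 E (adjoint T) = star (trace 𝕜 E T) := by
  let b := stdOrthonormalBasis 𝕜 E
  simp only [trace_eq_sum_inner _ b, star_sum, adjoint_inner_right, RCLike.star_def,
    inner_conj_symm]

theorem adjoint_add_adjoint_self (T : E →ₗ[𝕜] E) :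
    adjoint (T + adjoint T) = T + adjoint T := by
  rw [map_add, adjoint_adjoint, add_comm]

theorem eq_zero_of_trace_adjoint_comp_self_eq_zero {T : E →ₗ[𝕜] E}
    (h : trace 𝕜 E (adjoint T ∘ₗ T) = 0) : T = 0 := by
  let b := stdOrthonormalBasis 𝕜 E
  have hsum : ∑ i, ‖T (b i)‖ ^ 2 = 0 := by
    rw [trace_eq_sum_inner _ b] at h
    simp only [comp_apply, adjoint_inner_right, inner_self_eq_norm_sq_to_K] at h
    exact_mod_cast h
  have hzero : ∀ i, T (b i) = 0 := fun i => by
    simpa using (Finset.sum_eq_zero_iff_of_nonneg fun j _ => sq_nonneg ‖T (b j)‖).mp hsum i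
      (Finset.mem_univ i)
  exact b.toBasis.ext fun i => by simpa using hzero i

end InnerProductSpace

theorem trace_add_adjoint_sq {E : Type*} [NormedAddCommGroup E] [InnerProductSpace ℝ E]
    [FiniteDimensional ℝ E] (T : E →ₗ[ℝ] E) :
    trace ℝ E ((T + adjoint T) ∘ₗ (T + adjoint T)) = 2 * trace ℝ E ((T + adjoint T) ∘ₗ T) := by
  have h : trace ℝ E ((T + adjoint T) ∘ₗ adjoint T) = trace ℝ E ((T + adjoint T) ∘ₗ T) := by
    rw [← star_trivial (trace ℝ E (_ ∘ₗ adjoint T)), ← trace_adjoint, adjoint_comp,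
      adjoint_adjoint, adjoint_add_adjoint_self, trace_comp_comm']
  rw [comp_add, map_add, h, two_mul]

end LinearMap

theorem skew_adjoint_of_trace_zero_general (V : Type*) [NormedAddCommGroup V]
    [InnerProductSpace ℝ V] [FiniteDimensional ℝ V]
    (m : ℝ) (A : V →ₗ[ℝ] V) (x : V) (hAx : A x = 0)
    (htr : LinearMap.trace ℝ V
      (((1 / 2 : ℝ) • (A + LinearMap.adjoint A)
          - (‖x‖ ^ 2 / m) •
            ((ℝ ∙ x).subtype ∘ₗ (Submodule.orthogonalProjectionOnto (ℝ ∙ x) : V →L[ℝ] (ℝ ∙ x)).toLinearMap))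
        ∘ₗ A) = 0) :
    A + LinearMap.adjoint A = 0 := by
  set S := A + LinearMap.adjoint A
  set P : V →ₗ[ℝ] V :=
    (ℝ ∙ x).subtype ∘ₗ (Submodule.orthogonalProjectionOnto (ℝ ∙ x) : V →L[ℝ] (ℝ ∙ x)).toLinearMap
  have hPA : LinearMap.trace ℝ V (P ∘ₗ A) = 0 := by
    refine LinearMap.trace_comp_eq_zero_of_range_le_ker ?_
    calc LinearMap.range P ≤ LinearMap.range (ℝ ∙ x).subtype := LinearMap.range_comp_le_range _ _
      _ = ℝ ∙ x := Submodule.range_subtype _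
      _ ≤ LinearMap.ker A := (Submodule.span_singleton_le_iff_mem _ _).mpr hAx
  have hSA : LinearMap.trace ℝ V (S ∘ₗ A) = 0 := by
    rw [LinearMap.sub_comp, LinearMap.smul_comp, LinearMap.smul_comp, map_sub, map_smul, map_smul,
      hPA, smul_zero, sub_zero, smul_eq_mul] at htr
    linarith
  refine LinearMap.eq_zero_of_trace_adjoint_comp_self_eq_zero ?_
  rw [LinearMap.adjoint_add_adjoint_self, LinearMap.trace_add_adjoint_sq, hSA, mul_zero]

/-- Key linear-algebra step in the proof of Lemma 2.5: if `A x = 0` and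
`tr(((1/2)(A + A*) − (‖x‖²/m)·P_x) ∘ A) = 0`, then `A + A* = 0`, i.e. `A` is skew-adjoint. -/
theorem skew_adjoint_of_trace_zero (V : Type*) [NormedAddCommGroup V]
    [InnerProductSpace ℝ V] [FiniteDimensional ℝ V]
    (m : ℝ) (hm : m ≠ 0) (A : V →ₗ[ℝ] V) (x : V) (hAx : A x = 0)
    (htr : LinearMap.trace ℝ V
      (((1 / 2 : ℝ) • (A + LinearMap.adjoint A)
          - (‖x‖ ^ 2 / m) •
            ((ℝ ∙ x).subtype ∘ₗ (Submodule.orthogonalProjectionOnto (ℝ ∙ x) : V →L[ℝ] (ℝ ∙ x)).toLinearMap))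
        ∘ₗ A) = 0) :
    A + LinearMap.adjoint A = 0 :=
  skew_adjoint_of_trace_zero_general V m A x hAx htr
end
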